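/- For integer m > 1, the function γ_m(t) = [((m²+m)/2 · sinh²t + t²) cosh t − (m+1) t sinh t]/(m² sinh³ t) + (m−1)/(2m) has the asymptotic expansion γ_m(t) = ((m−1)/(2m)) t^{−1} + (m−1)/(2m) + ((m+2)(m+1)/(6m²)) t − ((m+4)(m+3)/(90 m²)) t³ + ((m+6)(m+5)/(945 m²)) t⁵ + O(t⁷) as t → 0⁺. -/

import Mathlib

set_option maxHeartbeats 1000000

open Real Asymptotics Filter

noncomputable def gammaCorr (m : ℕ) (t : ℝ) : ℝ :=
  ((((m : ℝ) ^ 2 + m) / 2 * Real.sinh t ^ 2 + t ^ 2) * Real.cosh t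
      - ((m : ℝ) + 1) * t * Real.sinh t) / ((m : ℝ) ^ 2 * Real.sinh t ^ 3)
    + ((m : ℝ) - 1) / (2 * m)

/-! Auxiliary definitions -/

/-- Degree-10 Taylor polynomial of `exp (k * t)`. -/
noncomputable def expT (k t : ℝ) : ℝ := ∑ i ∈ Finset.range 11, (k * t) ^ i / i.factorial

noncomputable def qq3 (M t : ℝ) : ℝ :=
  (M/16 - M^2/16) + (M/16 + M^2/16)*t + (-(1/24) - M/16 - M^2/48)*t^2
    + (1/60 + 7*M/720 + M^2/720)*t^4 + (-(1/252) - 11*M/7560 - M^2/7560)*t^6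

noncomputable def qq1 (M t : ℝ) : ℝ :=
  (-(3*M)/16 + 3*M^2/16) + (-(M/16) - M^2/16)*t + (-(3/8) - 5*M/16 + M^2/16)*t^2
    + (1/2)*t^3 + (-(1/20) - 7*M/240 - M^2/240)*t^4 + (1/84 + 11*M/2520 + M^2/2520)*t^6

noncomputable def qqm1 (M t : ℝ) : ℝ :=
  (3*M/16 - 3*M^2/16) + (-(M/16) - M^2/16)*t + (3/8 + 5*M/16 - M^2/16)*t^2
    + (1/2)*t^3 + (1/20 + 7*M/240 + M^2/240)*t^4 + (-(1/84) - 11*M/2520 - M^2/2520)*t^6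

noncomputable def qqm3 (M t : ℝ) : ℝ :=
  (-(M/16) + M^2/16) + (M/16 + M^2/16)*t + (1/24 + M/16 + M^2/48)*t^2
    + (-(1/60) - 7*M/720 - M^2/720)*t^4 + (1/252 + 11*M/7560 + M^2/7560)*t^6

noncomputable def hh (M t : ℝ) : ℝ :=
  (-(4/675) - 2591*M/1209600 + 181*M^2/403200)
    + (-(1973/1209600) - 281*M/1360800 + 7*M^2/194400)*t^2
    + (-(41/95256) - 451*M/2857680 - 41*M^2/2857680)*t^4

/-- The numerator function. -/
noncomputable def Nfun (M t : ℝ) : ℝ :=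
  t * (((M ^ 2 + M) / 2 * Real.sinh t ^ 2 + t ^ 2) * Real.cosh t
        - (M + 1) * t * Real.sinh t)
    - Real.sinh t ^ 3 * (M * (M - 1) / 2 + (M + 2) * (M + 1) / 6 * t ^ 2
        - (M + 4) * (M + 3) / 90 * t ^ 4 + (M + 6) * (M + 5) / 945 * t ^ 6)

lemma expT_isBigO (k : ℝ) :
    (fun t : ℝ => Real.exp (k * t) - expT k t) =O[nhds (0 : ℝ)] fun t => t ^ 11 := by
  rw [isBigO_iff]
  refine ⟨|k| ^ 11 * ((12 : ℝ) / ((Nat.factorial 11 : ℝ) * 11)), ?_⟩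
  have hball : Metric.ball (0 : ℝ) (|k| + 1)⁻¹ ∈ nhds (0 : ℝ) :=
    Metric.ball_mem_nhds 0 (by positivity)
  filter_upwards [hball] with t ht
  have ht' : |t| < (|k| + 1)⁻¹ := by simpa [Real.dist_eq] using ht
  have hkt : |k * t| ≤ 1 := by
    rw [abs_mul]
    have h1 : |k| * |t| ≤ |k| * (|k| + 1)⁻¹ :=
      mul_le_mul_of_nonneg_left ht'.le (abs_nonneg k)
    have h2 : |k| * (|k| + 1)⁻¹ ≤ 1 := by
      rw [mul_inv_le_iff₀ (by positivity)]
      linarith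
    linarith
  have hb := Real.exp_bound hkt (n := 11) (by norm_num)
  have : |Real.exp (k * t) - expT k t| ≤
      |k * t| ^ 11 * ((12 : ℝ) / ((Nat.factorial 11 : ℝ) * 11)) := by
    simpa [expT] using hb
  calc ‖Real.exp (k * t) - expT k t‖
      ≤ |k * t| ^ 11 * ((12 : ℝ) / ((Nat.factorial 11 : ℝ) * 11)) := this
    _ = |k| ^ 11 * ((12 : ℝ) / ((Nat.factorial 11 : ℝ) * 11)) * ‖t ^ 11‖ := by
        rw [abs_mul, mul_pow]
        simp [abs_pow]
        ring

/-- Expansion of `Nfun` in exponentials. -/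
lemma Nfun_eq_exp (M t : ℝ) :
    Nfun M t = qq3 M t * Real.exp (3 * t) + qq1 M t * Real.exp (1 * t)
      + qqm1 M t * Real.exp ((-1) * t) + qqm3 M t * Real.exp ((-3) * t) := by
  have h1 : Real.exp (3 * t) = Real.exp t ^ 3 := by
    rw [← Real.exp_nat_mul]; norm_num
  have h2 : Real.exp ((-1) * t) = (Real.exp t)⁻¹ := by
    rw [← Real.exp_neg]; ring_nf
  have h3 : Real.exp ((-3) * t) = (Real.exp t ^ 3)⁻¹ := by
    rw [← Real.exp_nat_mul, ← Real.exp_neg]; norm_num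
  have h4 : Real.exp (1 * t) = Real.exp t := by norm_num
  rw [Nfun, qq3, qq1, qqm1, qqm3, h1, h2, h3, h4, Real.sinh_eq, Real.cosh_eq, Real.exp_neg]
  have he : Real.exp t ≠ 0 := Real.exp_ne_zero t
  field_simp
  ring

/-- The key polynomial identity: the low-order terms cancel. -/
lemma key_poly (M t : ℝ) :
    qq3 M t * expT 3 t + qq1 M t * expT 1 t + qqm1 M t * expT (-1) t
      + qqm3 M t * expT (-3) t = t ^ 11 * hh M t := by
  simp only [expT, Finset.sum_range_succ, Finset.sum_range_zero, qq3, qq1, qqm1, qqm3, hh,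
    Nat.factorial]
  push_cast
  ring

lemma Nfun_isBigO (M : ℝ) :
    (fun t => Nfun M t) =O[nhds (0 : ℝ)] fun t => t ^ 11 := by
  have hq : ∀ q : ℝ → ℝ → ℝ, Continuous (fun t => q M t) →
      ∀ k : ℝ, (fun t => q M t * (Real.exp (k * t) - expT k t)) =O[nhds (0 : ℝ)]
        fun t => t ^ 11 := by
    intro q hc k
    have h1 : (fun t => q M t) =O[nhds (0 : ℝ)] (fun _ => (1 : ℝ)) :=
      (hc.tendsto 0).isBigO_one ℝ
    simpa using h1.mul (expT_isBigO k)
  have c3 : Continuous (fun t => qq3 M t) := by unfold qq3; continuity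
  have c1 : Continuous (fun t => qq1 M t) := by unfold qq1; continuity
  have cm1 : Continuous (fun t => qqm1 M t) := by unfold qqm1; continuity
  have cm3 : Continuous (fun t => qqm3 M t) := by unfold qqm3; continuity
  have ch : Continuous (fun t => hh M t) := by unfold hh; continuity
  have hmain : (fun t : ℝ => Nfun M t) = fun t =>
      t ^ 11 * hh M t + (qq3 M t * (Real.exp (3 * t) - expT 3 t)
        + qq1 M t * (Real.exp (1 * t) - expT 1 t)
        + qqm1 M t * (Real.exp ((-1) * t) - expT (-1) t)
        + qqm3 M t * (Real.exp ((-3) * t) - expT (-3) t)) := by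
    funext t
    rw [Nfun_eq_exp M t, ← key_poly M t]
    ring
  rw [hmain]
  have hth : (fun t : ℝ => t ^ 11 * hh M t) =O[nhds (0 : ℝ)] fun t => t ^ 11 := by
    have := (isBigO_refl (fun t : ℝ => t ^ 11) (nhds (0:ℝ))).mul
      ((ch.tendsto 0).isBigO_one ℝ (l := nhds (0 : ℝ)))
    simpa using this
  exact hth.add ((((hq qq3 c3 3).add (hq qq1 c1 1)).add (hq qqm1 cm1 (-1))).add
    (hq qqm3 cm3 (-3)))

theorem gammaCorr_taylor (m : ℕ) (hm : 1 < m) :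
    (fun t : ℝ => gammaCorr m t -
        (((m : ℝ) - 1) / (2 * m) * t⁻¹ + ((m : ℝ) - 1) / (2 * m)
          + ((m : ℝ) + 2) * ((m : ℝ) + 1) / (6 * (m : ℝ) ^ 2) * t
          - ((m : ℝ) + 4) * ((m : ℝ) + 3) / (90 * (m : ℝ) ^ 2) * t ^ 3
          + ((m : ℝ) + 6) * ((m : ℝ) + 5) / (945 * (m : ℝ) ^ 2) * t ^ 5))
      =O[nhdsWithin 0 (Set.Ioi 0)] fun t : ℝ => t ^ 7 := by
  set M : ℝ := (m : ℝ) with hM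
  have hM1 : (1 : ℝ) ≤ M := by rw [hM]; exact_mod_cast hm.le
  have hM0 : M ≠ 0 := by positivity
  -- the function agrees with Nfun / (M^2 * t * sinh t ^ 3) on (0, ∞)
  have heq : ∀ t : ℝ, 0 < t →
      gammaCorr m t -
        (((m : ℝ) - 1) / (2 * m) * t⁻¹ + ((m : ℝ) - 1) / (2 * m)
          + ((m : ℝ) + 2) * ((m : ℝ) + 1) / (6 * (m : ℝ) ^ 2) * t
          - ((m : ℝ) + 4) * ((m : ℝ) + 3) / (90 * (m : ℝ) ^ 2) * t ^ 3
          + ((m : ℝ) + 6) * ((m : ℝ) + 5) / (945 * (m : ℝ) ^ 2) * t ^ 5)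
        = Nfun M t / (M ^ 2 * t * Real.sinh t ^ 3) := by
    intro t ht
    have hs : 0 < Real.sinh t := Real.sinh_pos_iff.2 ht
    rw [gammaCorr, Nfun, ← hM]
    field_simp
    ring
  -- get a bound on Nfun
  obtain ⟨C, hC⟩ := (Nfun_isBigO M).bound
  have hC' : ∀ᶠ t in nhdsWithin 0 (Set.Ioi (0:ℝ)), ‖Nfun M t‖ ≤ C * ‖t ^ 11‖ :=
    nhdsWithin_le_nhds hC
  rw [isBigO_iff]
  refine ⟨|C|, ?_⟩
  filter_upwards [hC', self_mem_nhdsWithin] with t hNt (ht : 0 < t)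
  rw [heq t ht]
  have hs : 0 < Real.sinh t := Real.sinh_pos_iff.2 ht
  have hst : t ≤ Real.sinh t := (Real.self_lt_sinh_iff.2 ht).le
  have hden : t ^ 4 ≤ M ^ 2 * t * Real.sinh t ^ 3 := by
    have h1 : t * t ^ 3 ≤ t * Real.sinh t ^ 3 := by
      apply mul_le_mul_of_nonneg_left _ ht.le
      exact pow_le_pow_left₀ ht.le hst 3
    have hM2 : (1:ℝ) ≤ M ^ 2 := by nlinarith
    have h2 : t * Real.sinh t ^ 3 ≤ M ^ 2 * (t * Real.sinh t ^ 3) :=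
      le_mul_of_one_le_left (mul_pos ht (pow_pos hs 3)).le hM2
    calc t ^ 4 = t * t ^ 3 := by ring
      _ ≤ t * Real.sinh t ^ 3 := h1
      _ ≤ M ^ 2 * t * Real.sinh t ^ 3 := by linarith [h2]; 
  have hMpos : (0:ℝ) < M := lt_of_lt_of_le one_pos hM1
  have hden0 : 0 < M ^ 2 * t * Real.sinh t ^ 3 :=
    mul_pos (mul_pos (pow_pos hMpos 2) ht) (pow_pos hs 3)
  have hNb : ‖Nfun M t‖ ≤ |C| * t ^ 11 := by
    have h1 : C * ‖t ^ 11‖ ≤ |C| * ‖t ^ 11‖ :=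
      mul_le_mul_of_nonneg_right (le_abs_self C) (norm_nonneg _)
    have h2 : ‖t ^ 11‖ = t ^ 11 := by
      rw [Real.norm_eq_abs, abs_of_nonneg (pow_nonneg ht.le 11)]
    calc ‖Nfun M t‖ ≤ C * ‖t ^ 11‖ := hNt
      _ ≤ |C| * ‖t ^ 11‖ := h1
      _ = |C| * t ^ 11 := by rw [h2]
  have hkey : ‖Nfun M t / (M ^ 2 * t * Real.sinh t ^ 3)‖ ≤ |C| * t ^ 7 := by
    rw [norm_div, Real.norm_eq_abs (M ^ 2 * t * Real.sinh t ^ 3),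
      abs_of_pos hden0]
    have hq : ‖Nfun M t‖ / (M ^ 2 * t * Real.sinh t ^ 3) ≤ (|C| * t ^ 11) / t ^ 4 :=
      div_le_div₀ (mul_nonneg (abs_nonneg C) (pow_nonneg ht.le 11)) hNb (pow_pos ht 4) hden
    calc ‖Nfun M t‖ / (M ^ 2 * t * Real.sinh t ^ 3) ≤ (|C| * t ^ 11) / t ^ 4 := hq
      _ = |C| * t ^ 7 := by
          field_simp
  calc ‖Nfun M t / (M ^ 2 * t * Real.sinh t ^ 3)‖ ≤ |C| * t ^ 7 := hkey
    _ = |C| * ‖t ^ 7‖ := by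
        rw [Real.norm_eq_abs, abs_of_nonneg (pow_nonneg ht.le 7)]
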